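/- arXiv:1305.2551 — 6 statements merged into one kernel-verified Lean document; each statement's English description precedes it below -/
import Mathlib

section
/- Let S = K[x₁,...,xₙ] with graded maximal ideal m, and let A = S/I be an Artinian graded K-algebra with the Sperner property. If p is an integer with dim_K A_p = max_k dim_K A_k, then the ideal I + m^p has the Rees property. -/
open MvPolynomial

/-- The minimal number of generators of an ideal. -/
noncomputable def mu {R : Type*} [CommRing R] (I : Ideal R) : ℕ :=
  sInf {k | ∃ s : Finset R, s.card = k ∧ Ideal.span (s : Set R) = I}

/-- The graded maximal ideal `(x₁, …, xₙ)` of `K[x₁, …, xₙ]`. -/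
noncomputable def mm (K : Type*) [Field K] (n : ℕ) : Ideal (MvPolynomial (Fin n) K) :=
  Ideal.span (Set.range X)

/-- `I` is `m`-full: `mI : y = I` for some `y ∈ m`. -/
def IsMFull {R : Type*} [CommRing R] (m I : Ideal R) : Prop :=
  ∃ y ∈ m, (m * I).colon (Ideal.span {y}) = I

/-- A homogeneous ideal: one containing all homogeneous components of its elements. -/
def IsHomog {K : Type*} [Field K] {n : ℕ} (I : Ideal (MvPolynomial (Fin n) K)) : Prop :=
  ∀ f ∈ I, ∀ k : ℕ, homogeneousComponent k f ∈ I

/-- `dim_K (S/I)_k`, the dimension of the degree `k` part of `S/I`. -/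
noncomputable def hdim (K : Type*) [Field K] (n : ℕ)
    (I : Ideal (MvPolynomial (Fin n) K)) (k : ℕ) : ℕ :=
  Module.finrank K (Submodule.map (Ideal.Quotient.mkₐ K I).toLinearMap
    (homogeneousSubmodule (Fin n) K k))

/-- The total degree of an exponent vector. -/
def mdeg {n : ℕ} (d : Fin n →₀ ℕ) : ℕ := d.sum fun _ e => e

/-- `M_k(S/I)`: the exponent vectors of degree `k` monomials not in `I`. -/
def MSet (K : Type*) [Field K] {n : ℕ} (I : Ideal (MvPolynomial (Fin n) K)) (k : ℕ) :
    Set (Fin n →₀ ℕ) := {d | mdeg d = k ∧ (monomial d (1 : K)) ∉ I}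

/-- `I` is a monomial ideal. -/
def IsMonomialIdeal {K : Type*} [Field K] {n : ℕ} (I : Ideal (MvPolynomial (Fin n) K)) : Prop :=
  ∀ f ∈ I, ∀ d ∈ f.support, (monomial d (1 : K)) ∈ I

/-- The LYM property of the divisibility poset of monomials outside `I`,
ranked by degree.  (Divisibility of monomials is the pointwise order `≤` on
exponent vectors.) -/
def MLYM (K : Type*) [Field K] {n : ℕ} (I : Ideal (MvPolynomial (Fin n) K)) : Prop :=
  ∀ F : Finset (Fin n →₀ ℕ), (∀ d ∈ F, (monomial d (1 : K)) ∉ I) →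
    IsAntichain (· ≤ ·) (F : Set (Fin n →₀ ℕ)) →
    ∑ d ∈ F, (1 : ℚ) / (MSet K I (mdeg d)).ncard ≤ 1

/-- The Sperner property of the Artinian algebra `S/I`:
the maximal number of generators of an ideal of `S/I` equals the maximal
value of the Hilbert function of `S/I`. -/
def SpernerAlg {K : Type*} [Field K] {n : ℕ} (I : Ideal (MvPolynomial (Fin n) K)) : Prop :=
  sSup {m | ∃ J : Ideal (MvPolynomial (Fin n) K ⧸ I), mu J = m}
    = sSup (Set.range (hdim K n I))

/-!
Write `L = I + m^p`.  For a homogeneous `J ⊇ L`, lifting homogeneous bases and applying graded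
Nakayama gives `μ(J) ≤ dim_K J/(mJ + I) + dim_K (I + mL)/mL`.  The first term is at most the
number of generators of the ideal `J/I` of `A`, hence at most `max_k dim_K A_k = dim_K A_p` by the
Sperner property.  On the other side `I + mL = I + m^(p+1)`, and since `I` is homogeneous a form of
degree `p` in `I + m^(p+1)` already lies in `I`; so `A_p` embeds in `L/(I + mL)`, whence
`dim_K (I + mL)/mL + dim_K A_p ≤ dim_K L/mL ≤ μ(L)`.
-/

open Submodule Module

section Quotient

variable {K M : Type*} [Field K] [AddCommGroup M] [Module K M]

theorem finrank_map_mkQ_add_finrank_inf (V W : Submodule K M) [FiniteDimensional K V] :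
    finrank K (map W.mkQ V) + finrank K ↥(V ⊓ W) = finrank K V := by
  let φ := W.mkQ.comp V.subtype
  have hrange : LinearMap.range φ = map W.mkQ V := by
    rw [LinearMap.range_comp, range_subtype]
  have hker : LinearMap.ker φ = comap V.subtype (V ⊓ W) := by
    rw [LinearMap.ker_comp, ker_mkQ]
    ext x
    simp
  rw [← LinearMap.finrank_range_add_finrank_ker φ, hrange, hker,
    (comapSubtypeEquivOfLe inf_le_left).finrank_eq]

theorem finrank_map_mkQ_add_finrank_map_mkQ_sup_le {U V W : Submodule K M} (hUV : U ≤ V)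
    [FiniteDimensional K (map W.mkQ V)] :
    finrank K (map W.mkQ U) + finrank K (map (U ⊔ W).mkQ V) ≤ finrank K (map W.mkQ V) := by
  let φ := (factor (le_sup_right : W ≤ U ⊔ W)).comp (map W.mkQ V).subtype
  have hrange : LinearMap.range φ = map (U ⊔ W).mkQ V := by
    rw [LinearMap.range_comp, range_subtype, ← map_comp, factor_comp_mk]
  have hker : comap (map W.mkQ V).subtype (map W.mkQ U) ≤ LinearMap.ker φ := by
    rintro ⟨_, _⟩ ⟨u, hu, rfl⟩
    exact (Quotient.mk_eq_zero _).mpr (mem_sup_left hu)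
  rw [← LinearMap.finrank_range_add_finrank_ker φ, hrange, add_comm,
    ← (comapSubtypeEquivOfLe (map_mono hUV)).finrank_eq]
  exact Nat.add_le_add_left (finrank_mono hker) _

end Quotient

section Ideals

variable {R : Type*} [CommRing R]

theorem le_sup_pow_mul_of_le_sup_mul {m J C : Ideal R} (h : J ≤ C ⊔ m * J) :
    ∀ N : ℕ, J ≤ C ⊔ m ^ N * J
  | 0 => by rw [pow_zero, one_mul]; exact le_sup_right
  | N + 1 => calc
      J ≤ C ⊔ m ^ N * (C ⊔ m * J) :=
        (le_sup_pow_mul_of_le_sup_mul h N).trans (sup_le_sup_left (Ideal.mul_mono_right h) _)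
      _ ≤ C ⊔ m ^ (N + 1) * J := by
        rw [Ideal.mul_sup, ← mul_assoc, ← pow_succ, ← sup_assoc]
        exact sup_le_sup_right (sup_le le_rfl Ideal.mul_le_right) _

theorem mu_le_card {P : Ideal R} (s : Finset R) (h : Ideal.span (s : Set R) = P) :
    mu P ≤ s.card :=
  Nat.sInf_le ⟨s, rfl, h⟩

theorem exists_card_eq_mu {P : Ideal R} (h : P.FG) :
    ∃ s : Finset R, s.card = mu P ∧ Ideal.span (s : Set R) = P := by
  obtain ⟨s, hs⟩ := h
  exact Nat.sInf_mem (s := {k | ∃ s : Finset R, s.card = k ∧ Ideal.span (s : Set R) = P})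
    ⟨s.card, s, rfl, hs⟩

theorem mu_le_finrank (K : Type*) [Field K] [Algebra K R] [FiniteDimensional K R] (P : Ideal R) :
    mu P ≤ finrank K R := by
  obtain ⟨t, htP, hcard, hspan, -⟩ := exists_finset_span_eq_linearIndepOn K (P : Set R)
  have hspanP : span K (P : Set R) = P.restrictScalars K := span_eq (P.restrictScalars K)
  refine (mu_le_card t (le_antisymm (Ideal.span_le.mpr htP) fun x hx => ?_)).trans ?_
  · have hx' : x ∈ span K (t : Set R) := hspan ▸ hspanP ▸ hx
    exact span_le_restrictScalars K R _ hx'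
  · exact hcard ▸ hspanP ▸ Submodule.finrank_le _

theorem exists_finset_span_sup_eq {I J : Ideal R} (hIJ : I ≤ J)
    (hJ : (J.map (Ideal.Quotient.mk I)).FG) :
    ∃ s : Finset R, (s : Set R) ⊆ J ∧ s.card ≤ mu (J.map (Ideal.Quotient.mk I)) ∧
      Ideal.span ↑s ⊔ I = J := by
  classical
  obtain ⟨t, hcard, hspan⟩ := exists_card_eq_mu hJ
  let lift := Function.surjInv (Ideal.Quotient.mk_surjective (I := I))
  have hmap : (t.image lift : Set R).image (Ideal.Quotient.mk I) = t := by
    simp [lift, Set.image_image, Function.surjInv_eq]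
  have hspan' : Ideal.span ↑(t.image lift) ⊔ I = J := by
    rw [← Ideal.comap_map_mk hIJ, ← hspan, ← hmap, ← Ideal.map_span,
      Ideal.comap_map_quotientMk, sup_comm]
  refine ⟨t.image lift, ?_, hcard ▸ Finset.card_image_le, hspan'⟩
  exact fun x hx => hspan'.le (Ideal.mem_sup_left (Ideal.subset_span hx))

end Ideals

section ModuloIdeal

variable {K R : Type*} [Field K] [CommRing R] [Algebra K R] {m P Q : Ideal R}
  {W : Submodule K R}

theorem map_mkQ_le_span_image (hdec : ∀ x : R, ∃ c : K, x - algebraMap K R c ∈ m)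
    (hW : (m * P ⊔ Q).restrictScalars K ≤ W) {s : Finset R} (hsP : (s : Set R) ⊆ P)
    (hs : P ≤ Ideal.span s ⊔ Q) :
    map W.mkQ (P.restrictScalars K) ≤ span K (W.mkQ '' s) := by
  rintro _ ⟨x, hx, rfl⟩
  obtain ⟨y, hy, q, hq, rfl⟩ := Submodule.mem_sup.mp (hs hx)
  obtain ⟨a, -, rfl⟩ := mem_span_finset.mp hy
  have hq0 : W.mkQ q = 0 := (Quotient.mk_eq_zero W).mpr (hW (Ideal.mem_sup_right hq))
  rw [map_add, hq0, add_zero, map_sum]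
  refine sum_mem fun i hi => ?_
  obtain ⟨c, hc⟩ := hdec (a i)
  have hz : W.mkQ ((a i - algebraMap K R c) * i) = 0 :=
    (Quotient.mk_eq_zero W).mpr (hW (Ideal.mem_sup_left (Ideal.mul_mem_mul hc (hsP hi))))
  have hai : a i • i = c • i + (a i - algebraMap K R c) * i := by
    rw [smul_eq_mul, Algebra.smul_def]; ring
  rw [hai, map_add, hz, add_zero, map_smul]
  exact smul_mem _ _ (subset_span ⟨i, hi, rfl⟩)

theorem finrank_map_mkQ_le_card (hdec : ∀ x : R, ∃ c : K, x - algebraMap K R c ∈ m)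
    (hW : (m * P ⊔ Q).restrictScalars K ≤ W) {s : Finset R} (hsP : (s : Set R) ⊆ P)
    (hs : P ≤ Ideal.span s ⊔ Q) :
    finrank K (map W.mkQ (P.restrictScalars K)) ≤ s.card := by
  classical
  calc finrank K (map W.mkQ (P.restrictScalars K))
      ≤ finrank K (span K ((s.image W.mkQ : Finset (R ⧸ W)) : Set (R ⧸ W))) :=
        finrank_mono (by rw [Finset.coe_image]; exact map_mkQ_le_span_image hdec hW hsP hs)
    _ ≤ (s.image W.mkQ).card := finrank_span_finset_le_card _
    _ ≤ s.card := Finset.card_image_le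

theorem finiteDimensional_map_mkQ (hdec : ∀ x : R, ∃ c : K, x - algebraMap K R c ∈ m)
    (hP : P.FG) (hW : (m * P).restrictScalars K ≤ W) :
    FiniteDimensional K (map W.mkQ (P.restrictScalars K)) := by
  obtain ⟨s, rfl⟩ := hP
  have := FiniteDimensional.span_of_finite K (s.finite_toSet.image W.mkQ)
  exact Submodule.finiteDimensional_of_le
    (map_mkQ_le_span_image hdec (Q := ⊥) (by simpa) Ideal.subset_span le_sup_left)

theorem finrank_map_mkQ_le_mu (hdec : ∀ x : R, ∃ c : K, x - algebraMap K R c ∈ m)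
    (hP : P.FG) (hW : (m * P).restrictScalars K ≤ W) :
    finrank K (map W.mkQ (P.restrictScalars K)) ≤ mu P := by
  obtain ⟨s, hcard, rfl⟩ := exists_card_eq_mu hP
  exact hcard ▸ finrank_map_mkQ_le_card hdec (Q := ⊥) (by simpa) Ideal.subset_span
    le_sup_left

end ModuloIdeal

section GradedLift

variable {K A ι : Type*} [Field K] [CommRing A] [Algebra K A] [DecidableEq ι] [AddMonoid ι]
  {𝒜 : ι → Submodule K A} [GradedAlgebra 𝒜]

theorem Ideal.IsHomogeneous.restrictScalars_eq_span {P : Ideal A} (hP : P.IsHomogeneous 𝒜) :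
    P.restrictScalars K = Submodule.span K {x | x ∈ P ∧ SetLike.IsHomogeneousElem 𝒜 x} := by
  classical
  refine le_antisymm (fun x hx => ?_) (Submodule.span_le.mpr fun x hx => hx.1)
  rw [← DirectSum.sum_support_decompose 𝒜 x]
  exact Submodule.sum_mem _ fun i _ =>
    Submodule.subset_span
      (show _ ∧ _ from ⟨hP.mem_iff.mp hx i, i, (DirectSum.decompose 𝒜 x i).2⟩)

theorem Ideal.IsHomogeneous.exists_finset_le_span_sup {P : Ideal A} (hP : P.IsHomogeneous 𝒜)
    (W : Submodule K A) [FiniteDimensional K (Submodule.map W.mkQ (P.restrictScalars K))] :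
    ∃ T : Finset A, (∀ x ∈ T, x ∈ P ∧ SetLike.IsHomogeneousElem 𝒜 x) ∧
      T.card ≤ finrank K (Submodule.map W.mkQ (P.restrictScalars K)) ∧
      P.restrictScalars K ≤ Submodule.span K T ⊔ W := by
  classical
  set H := {x | x ∈ P ∧ SetLike.IsHomogeneousElem 𝒜 x}
  have hspan : Submodule.span K (W.mkQ '' H) = Submodule.map W.mkQ (P.restrictScalars K) := by
    rw [← Submodule.map_span, ← hP.restrictScalars_eq_span]
  have : FiniteDimensional K (Submodule.span K (W.mkQ '' H)) := hspan ▸ inferInstance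
  obtain ⟨t, htH, hcard, htspan, -⟩ := exists_finset_span_eq_linearIndepOn K (W.mkQ '' H)
  choose lift hliftH hlift using htH
  set T := t.attach.image fun y => lift y.2
  refine ⟨T, ?_, ?_, ?_⟩
  · simp only [T, Finset.mem_image]
    rintro _ ⟨y, -, rfl⟩
    exact hliftH y.2
  · rw [← hspan, ← hcard]
    exact Finset.card_image_le.trans t.card_attach.le
  · have ht : Submodule.map W.mkQ (P.restrictScalars K) ≤
        Submodule.map W.mkQ (Submodule.span K T) := by
      rw [← hspan, ← htspan, Submodule.map_span]
      refine Submodule.span_mono fun y hy => ⟨lift hy, ?_, hlift hy⟩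
      simp only [T, Finset.coe_image, Set.mem_image]
      exact ⟨⟨y, hy⟩, by simp, rfl⟩
    rw [sup_comm, ← Submodule.comap_map_mkQ]
    exact (Submodule.le_comap_map _ _).trans (Submodule.comap_mono ht)

end GradedLift

section PolynomialRing

variable {K : Type*} [Field K] {n : ℕ}

attribute [local instance] MvPolynomial.gradedAlgebra

local notation "S" => MvPolynomial (Fin n) K
local notation "hS" => homogeneousSubmodule (Fin n) K

theorem isHomog_iff_isHomogeneous {I : Ideal S} : IsHomog I ↔ I.IsHomogeneous hS := by
  refine ⟨fun h i f hf => ?_, fun h f hf k => homogeneousComponent_mem_of_mem h hf k⟩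
  exact (decomposition.decompose'_apply f i).symm ▸ h f hf i

theorem exists_sub_algebraMap_mem_mm (f : S) : ∃ c : K, f - algebraMap K S c ∈ mm K n := by
  refine ⟨constantCoeff f, ?_⟩
  rw [← pow_one (mm K n), mm, mem_pow_idealOfVars_iff']
  intro d hd
  rw [Nat.lt_one_iff, Finsupp.degree_eq_zero_iff] at hd
  simp [hd, constantCoeff_eq]

theorem homogeneousComponent_eq_zero_of_mem_pow_mm {N k : ℕ} {f : S} (hf : f ∈ mm K n ^ N)
    (hk : k < N) : homogeneousComponent k f = 0 := by
  ext d
  rw [coeff_homogeneousComponent, coeff_zero]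
  split_ifs with hd
  · exact (mem_pow_idealOfVars_iff' N f).mp hf d (hd ▸ hk)
  · rfl

theorem mem_pow_mm_of_mem_homogeneousSubmodule {N d : ℕ} {f : S} (hf : f ∈ hS d)
    (hN : N ≤ d) : f ∈ mm K n ^ N :=
  (mem_pow_idealOfVars_iff N f).mpr fun x hx => by
    by_contra hlt
    exact mem_support_iff.mp hx <|
      ((mem_homogeneousSubmodule _ _).mp hf).coeff_eq_zero (by omega)

/-- Graded Nakayama lemma. -/
theorem le_of_le_sup_mm_mul {J C : Ideal S} (hC : C.IsHomogeneous hS)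
    (h : J ≤ C ⊔ mm K n * J) : J ≤ C := by
  intro f hf
  obtain ⟨c, hc, g, hg, hcg⟩ :=
    Submodule.mem_sup.mp (le_sup_pow_mul_of_le_sup_mul h (f.totalDegree + 1) hf)
  refine (mem_iff_homogeneousComponent_mem hC _).mpr fun k => ?_
  rcases lt_or_ge k (f.totalDegree + 1) with hk | hk
  · have hg' : g ∈ mm K n ^ (f.totalDegree + 1) := Ideal.mul_le_left hg
    rw [← hcg, map_add, homogeneousComponent_eq_zero_of_mem_pow_mm hg' hk, add_zero]
    exact homogeneousComponent_mem_of_mem hC hc k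
  · rw [homogeneousComponent_eq_zero _ _ (by omega)]
    exact zero_mem C

theorem hdim_eq_finrank_map_mkQ (I : Ideal S) (p : ℕ) :
    hdim K n I p = finrank K (map (I.restrictScalars K).mkQ (hS p)) := by
  have hcomp : (Ideal.Quotient.mkₐ K I).toLinearMap =
      (Quotient.restrictScalarsEquiv K (I : Submodule S S)).toLinearMap ∘ₗ
        (I.restrictScalars K).mkQ := rfl
  rw [hdim, hcomp, map_comp]
  exact LinearEquiv.finrank_map_eq _ _

theorem mem_of_mem_homogeneousSubmodule_of_mem_sup_pow_succ {I : Ideal S}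
    (hI : I.IsHomogeneous hS) {p : ℕ} {f : S} (hf : f ∈ hS p)
    (hfI : f ∈ I ⊔ mm K n ^ (p + 1)) : f ∈ I := by
  obtain ⟨a, ha, b, hb, rfl⟩ := Submodule.mem_sup.mp hfI
  have hfp : homogeneousComponent p (a + b) = a + b := by
    rw [homogeneousComponent_of_mem hf, if_pos rfl]
  rw [← hfp, map_add, homogeneousComponent_eq_zero_of_mem_pow_mm hb p.lt_succ_self, add_zero]
  exact homogeneousComponent_mem_of_mem hI ha p

theorem hdim_le_finrank_map_mkQ_sup_pow_succ {I : Ideal S} (hI : I.IsHomogeneous hS) (p : ℕ) :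
    hdim K n I p ≤ finrank K (map ((I ⊔ mm K n ^ (p + 1)).restrictScalars K).mkQ
      ((I ⊔ mm K n ^ p).restrictScalars K)) := by
  set W := (I ⊔ mm K n ^ (p + 1)).restrictScalars K
  have : FiniteDimensional K (hS p) :=
    Module.Finite.iff_fg.mpr (homogeneousSubmodule_fg (σ := Fin n) (R := K) p)
  have : FiniteDimensional K (map W.mkQ ((I ⊔ mm K n ^ p).restrictScalars K)) := by
    refine finiteDimensional_map_mkQ exists_sub_algebraMap_mem_mm (IsNoetherian.noetherian _) ?_
    rw [Ideal.mul_sup, ← pow_succ']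
    exact Submodule.restrictScalars_mono K (sup_le_sup_right Ideal.mul_le_right _)
  have hinf : hS p ⊓ W = hS p ⊓ I.restrictScalars K :=
    le_antisymm
      (fun f hf => ⟨hf.1, mem_of_mem_homogeneousSubmodule_of_mem_sup_pow_succ hI hf.1 hf.2⟩)
      (inf_le_inf_left _ (Submodule.restrictScalars_mono K le_sup_left))
  have h₁ := finrank_map_mkQ_add_finrank_inf (hS p) W
  have h₂ := finrank_map_mkQ_add_finrank_inf (hS p) (I.restrictScalars K)
  rw [hinf] at h₁
  calc hdim K n I p = finrank K (map W.mkQ (hS p)) := by rw [hdim_eq_finrank_map_mkQ]; omega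
    _ ≤ _ := finrank_mono (map_mono fun f hf =>
        Ideal.mem_sup_right (mem_pow_mm_of_mem_homogeneousSubmodule hf le_rfl))

theorem finrank_map_mkQ_add_hdim_le {I : Ideal S} (hI : IsHomog I) (p : ℕ) :
    finrank K (map ((mm K n * (I ⊔ mm K n ^ p)).restrictScalars K).mkQ (I.restrictScalars K))
        + hdim K n I p ≤
      finrank K (map ((mm K n * (I ⊔ mm K n ^ p)).restrictScalars K).mkQ
        ((I ⊔ mm K n ^ p).restrictScalars K)) := by
  have : FiniteDimensional K (map ((mm K n * (I ⊔ mm K n ^ p)).restrictScalars K).mkQ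
      ((I ⊔ mm K n ^ p).restrictScalars K)) :=
    finiteDimensional_map_mkQ exists_sub_algebraMap_mem_mm (IsNoetherian.noetherian _) le_rfl
  have hsup : I ⊔ mm K n * (I ⊔ mm K n ^ p) = I ⊔ mm K n ^ (p + 1) := by
    rw [Ideal.mul_sup, ← pow_succ', ← sup_assoc,
      sup_eq_left.mpr (Ideal.mul_le_right : mm K n * I ≤ I)]
  have := finrank_map_mkQ_add_finrank_map_mkQ_sup_le
    (Submodule.restrictScalars_mono K (le_sup_left : I ≤ I ⊔ mm K n ^ p))
    (W := (mm K n * (I ⊔ mm K n ^ p)).restrictScalars K)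
  rw [← restrictScalars_sup, hsup] at this
  exact (Nat.add_le_add_left
    (hdim_le_finrank_map_mkQ_sup_pow_succ (isHomog_iff_isHomogeneous.mp hI) p) _).trans this

theorem mu_le_hdim_of_spernerAlg {I : Ideal S} [FiniteDimensional K (S ⧸ I)]
    (hSperner : SpernerAlg I) {p : ℕ} (hp : hdim K n I p = sSup (Set.range (hdim K n I)))
    (J : Ideal (S ⧸ I)) : mu J ≤ hdim K n I p := by
  rw [hp, ← hSperner]
  refine le_csSup ⟨finrank K (S ⧸ I), ?_⟩ ⟨J, rfl⟩
  rintro _ ⟨J', rfl⟩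
  exact mu_le_finrank K J'

theorem finrank_map_mkQ_mul_sup_le_hdim {I : Ideal S} [FiniteDimensional K (S ⧸ I)]
    (hSperner : SpernerAlg I) {p : ℕ} (hp : hdim K n I p = sSup (Set.range (hdim K n I)))
    {J : Ideal S} (hIJ : I ≤ J) :
    finrank K (map ((mm K n * J ⊔ I).restrictScalars K).mkQ (J.restrictScalars K)) ≤
      hdim K n I p := by
  obtain ⟨s, hsJ, hcard, hspan⟩ := exists_finset_span_sup_eq hIJ (IsNoetherian.noetherian _)
  exact (finrank_map_mkQ_le_card exists_sub_algebraMap_mem_mm le_rfl hsJ hspan.ge).trans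
    (hcard.trans (mu_le_hdim_of_spernerAlg hSperner hp _))

theorem mu_le_card_of_le_span_sup {J : Ideal S} {T : Finset S}
    (hT : ∀ f ∈ T, f ∈ J ∧ SetLike.IsHomogeneousElem hS f)
    (hJ : J.restrictScalars K ≤ span K T ⊔ (mm K n * J).restrictScalars K) :
    mu J ≤ T.card := by
  refine mu_le_card T (le_antisymm (Ideal.span_le.mpr fun f hf => (hT f hf).1) ?_)
  refine le_of_le_sup_mm_mul (Ideal.homogeneous_span _ _ fun f hf => (hT f hf).2) ?_
  have hspan : span K (T : Set S) ≤ (Ideal.span (T : Set S)).restrictScalars K :=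
    span_le_restrictScalars K S _
  rw [← Submodule.restrictScalars_le K]
  exact hJ.trans (by rw [restrictScalars_sup]; exact sup_le_sup_right hspan _)

theorem mu_le_finrank_map_mkQ_add_finrank_map_mkQ {I J : Ideal S} (hI : IsHomog I)
    (hJ : IsHomog J) (hIJ : I ≤ J) {W : Submodule K S}
    (hIW : (mm K n * I).restrictScalars K ≤ W) (hWJ : W ≤ (mm K n * J).restrictScalars K) :
    mu J ≤ finrank K (map ((mm K n * J ⊔ I).restrictScalars K).mkQ (J.restrictScalars K)) +
      finrank K (map W.mkQ (I.restrictScalars K)) := by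
  classical
  have : FiniteDimensional K
      (map ((mm K n * J ⊔ I).restrictScalars K).mkQ (J.restrictScalars K)) :=
    finiteDimensional_map_mkQ exists_sub_algebraMap_mem_mm (IsNoetherian.noetherian _)
      (Submodule.restrictScalars_mono K le_sup_left)
  have : FiniteDimensional K (map W.mkQ (I.restrictScalars K)) :=
    finiteDimensional_map_mkQ exists_sub_algebraMap_mem_mm (IsNoetherian.noetherian _) hIW
  obtain ⟨T, hT, hTcard, hJT⟩ := (isHomog_iff_isHomogeneous.mp hJ).exists_finset_le_span_sup
    ((mm K n * J ⊔ I).restrictScalars K)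
  obtain ⟨U, hU, hUcard, hIU⟩ := (isHomog_iff_isHomogeneous.mp hI).exists_finset_le_span_sup W
  have hJTU : J.restrictScalars K ≤ span K ↑(T ∪ U) ⊔ (mm K n * J).restrictScalars K := by
    rw [Finset.coe_union, span_union]
    refine hJT.trans ?_
    rw [restrictScalars_sup]
    refine sup_le (le_sup_left.trans le_sup_left) (sup_le le_sup_right (hIU.trans (sup_le ?_ ?_)))
    · exact le_sup_right.trans le_sup_left
    · exact hWJ.trans le_sup_right
  calc mu J ≤ (T ∪ U).card := mu_le_card_of_le_span_sup
        (fun f hf => (Finset.mem_union.mp hf).elim (hT f)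
          fun hf => ⟨hIJ (hU f hf).1, (hU f hf).2⟩)
        hJTU
    _ ≤ T.card + U.card := Finset.card_union_le T U
    _ ≤ _ := Nat.add_le_add hTcard hUcard

end PolynomialRing

/-- If the Artinian graded algebra `A = S/I` has the Sperner property and `p`
is a degree where the Hilbert function of `A` attains its maximum, then
`I + m^p` has the Rees property. -/
theorem stmt1 {K : Type*} [Field K] {n : ℕ} (I : Ideal (MvPolynomial (Fin n) K))
    (hI : IsHomog I) [FiniteDimensional K (MvPolynomial (Fin n) K ⧸ I)]
    (hSperner : SpernerAlg I)
    (p : ℕ) (hp : hdim K n I p = sSup (Set.range (hdim K n I))) :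
    ∀ J : Ideal (MvPolynomial (Fin n) K), IsHomog J → I + mm K n ^ p ≤ J →
      mu J ≤ mu (I + mm K n ^ p) := by
  intro J hJ hLJ
  rw [Submodule.add_eq_sup] at hLJ ⊢
  set L := I ⊔ mm K n ^ p
  set W := (mm K n * L).restrictScalars K
  have hIJ : I ≤ J := le_sup_left.trans hLJ
  calc mu J ≤ finrank K (map ((mm K n * J ⊔ I).restrictScalars K).mkQ (J.restrictScalars K)) +
        finrank K (map W.mkQ (I.restrictScalars K)) :=
        mu_le_finrank_map_mkQ_add_finrank_map_mkQ hI hJ hIJ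
          (Submodule.restrictScalars_mono K (Ideal.mul_mono_right le_sup_left))
          (Submodule.restrictScalars_mono K (Ideal.mul_mono_right hLJ))
    _ ≤ hdim K n I p + finrank K (map W.mkQ (I.restrictScalars K)) :=
        Nat.add_le_add_right (finrank_map_mkQ_mul_sup_le_hdim hSperner hp hIJ) _
    _ ≤ finrank K (map W.mkQ (L.restrictScalars K)) := by
        rw [add_comm]; exact finrank_map_mkQ_add_hdim_le hI p
    _ ≤ mu L :=
        finrank_map_mkQ_le_mu exists_sub_algebraMap_mem_mm (IsNoetherian.noetherian _) le_rfl
end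

section
/- Let S = K[x₁,...,xₙ], m = (x₁,...,xₙ), and A = S/I an Artinian graded K-algebra. Suppose p is an integer with dim_K A_p = max_k dim_K A_k, and there exists a nonnegative integer s < p such that I has no minimal generators of degree s+1 and the multiplication map ×y : A_s → A_{s+1} is not injective for every linear form y ∈ S. Then the ideal I + m^p is not m-full. -/
/-! Suppose `𝔪J : y = J` for `J = I + 𝔪^p` and write `y = ℓ + q` with `ℓ` linear and `q ∈ 𝔪²`.
The hypotheses give a form `f ∉ J` of degree `s` with `ℓ f ∈ 𝔪J`. As `𝔪^p ⊆ J`, such forms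
live in degrees below `p`, so there is one, `g`, of maximal degree. Comparing homogeneous
components, maximality forces `g q ∈ J`. Then `g y · y ∈ 𝔪J`, so `g y ∈ J`, so `g 𝔪 ⊆ J` and
`g q ∈ 𝔪J`; hence `g y = ℓ g + g q ∈ 𝔪J`, i.e. `g ∈ 𝔪J : y = J`, a contradiction. -/

open MvPolynomial

theorem Ideal.mem_of_mul_colon_eq {R : Type*} [CommSemiring R] {m J : Ideal R} {y ℓ q g : R}
    (hcolon : (m * J).colon (Ideal.span {y}) = J) (hym : y ∈ m) (hy : y = ℓ + q)
    (hq : q ∈ m ^ 2) (hℓg : ℓ * g ∈ m * J) (hgq : g * q ∈ J) : g ∈ J := by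
  have hgy : g * y ∈ J := by
    rw [← hcolon, Ideal.mem_colon_span_singleton]
    have : g * y * y = ℓ * g * y + y * (g * q) := by rw [hy]; ring
    rw [this]
    exact add_mem (Ideal.mul_mem_right y _ hℓg) (Ideal.mul_mem_mul hym hgq)
  have hgm : Ideal.span {g} * m ≤ J := by
    refine Ideal.span_singleton_mul_le_iff.mpr fun z hz => ?_
    rw [← hcolon, Ideal.mem_colon_span_singleton]
    have : g * z * y = z * (g * y) := by ring
    rw [this]
    exact Ideal.mul_mem_mul hz hgy
  have hgq_mJ : g * q ∈ m * J := by
    have : Ideal.span {g} * m ^ 2 ≤ m * J := by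
      rw [pow_two, mul_left_comm]
      exact Ideal.mul_mono_right hgm
    exact this (Ideal.mul_mem_mul (Ideal.mem_span_singleton_self g) hq)
  rw [← hcolon, Ideal.mem_colon_span_singleton, hy, mul_add, mul_comm g ℓ]
  exact add_mem hℓg hgq_mJ

namespace MvPolynomial

attribute [local instance] gradedAlgebra

theorem coe_decompose_homogeneousSubmodule {σ R : Type*} [CommSemiring R]
    (φ : MvPolynomial σ R) (i : ℕ) :
    (DirectSum.decompose (homogeneousSubmodule σ R) φ i : MvPolynomial σ R) =
      homogeneousComponent i φ :=
  decomposition.decompose'_apply φ i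

theorem _root_.IsHomog.isHomogeneous {K : Type*} [Field K] {n : ℕ}
    {I : Ideal (MvPolynomial (Fin n) K)} (hI : IsHomog I) :
    I.IsHomogeneous (homogeneousSubmodule (Fin n) K) := by
  intro i f hf
  rw [coe_decompose_homogeneousSubmodule]
  exact hI f hf i

section CommSemiring

variable {σ R : Type*} [CommSemiring R]

local notation "𝔪" => idealOfVars σ R

theorem IsHomogeneous.mem_pow_idealOfVars {φ : MvPolynomial σ R} {d k : ℕ}
    (hφ : φ.IsHomogeneous d) (hkd : k ≤ d) : φ ∈ 𝔪 ^ k := by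
  rw [mem_pow_idealOfVars_iff]
  intro x hx
  rwa [Finsupp.degree_eq_weight_one, ← Pi.one_def, hφ (mem_support_iff.mp hx)]

theorem homogeneousComponent_eq_zero_of_mem_pow_idealOfVars {x : MvPolynomial σ R} {k e : ℕ}
    (hx : x ∈ 𝔪 ^ k) (hek : e < k) : homogeneousComponent e x = 0 := by
  ext d
  rw [coeff_homogeneousComponent, coeff_zero]
  split_ifs with hd
  · exact (mem_pow_idealOfVars_iff' k x).mp hx d (hd ▸ hek)
  · rfl

theorem isHomogeneous_pow_idealOfVars (k : ℕ) :
    (𝔪 ^ k).IsHomogeneous (homogeneousSubmodule σ R) := by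
  intro i x hx
  rw [coe_decompose_homogeneousSubmodule, mem_pow_idealOfVars_iff] at *
  intro d hd
  rw [support_homogeneousComponent, Finset.mem_filter] at hd
  exact hx d hd.1

theorem homogeneousComponent_add_mul {φ : MvPolynomial σ R} {i : ℕ} (hφ : φ.IsHomogeneous i)
    (ψ : MvPolynomial σ R) (j : ℕ) :
    homogeneousComponent (i + j) (φ * ψ) = φ * homogeneousComponent j ψ := by
  simpa only [coe_decompose_homogeneousSubmodule] using
    DirectSum.coe_decompose_mul_add_of_left_mem (𝒜 := homogeneousSubmodule σ R) (b := ψ) (j := j)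
      hφ

theorem homogeneousComponent_mul_of_lt {φ : MvPolynomial σ R} {i j : ℕ} (hφ : φ.IsHomogeneous i)
    (ψ : MvPolynomial σ R) (hji : j < i) : homogeneousComponent j (φ * ψ) = 0 := by
  simpa only [coe_decompose_homogeneousSubmodule] using
    DirectSum.coe_decompose_mul_of_left_mem_of_not_le (𝒜 := homogeneousSubmodule σ R) (b := ψ)
      hφ (not_le.mpr hji)

theorem mul_mem_of_forall_gt {J : Ideal (MvPolynomial σ R)}
    (hJ : J.IsHomogeneous (homogeneousSubmodule σ R)) {ℓ q g : MvPolynomial σ R} {d : ℕ}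
    (hℓ : ℓ.IsHomogeneous 1) (hq : q ∈ 𝔪 ^ 2) (hg : g.IsHomogeneous d) (hℓg : ℓ * g ∈ 𝔪 * J)
    (hmax : ∀ e > d, ∀ h : MvPolynomial σ R, h.IsHomogeneous e → ℓ * h ∈ 𝔪 * J → h ∈ J) :
    g * q ∈ J := by
  have hmJ : (𝔪 * J).IsHomogeneous (homogeneousSubmodule σ R) := by
    simpa only [pow_one] using (isHomogeneous_pow_idealOfVars 1).mul hJ
  refine hJ.mem_iff.mpr fun e => ?_
  rw [coe_decompose_homogeneousSubmodule]
  rcases lt_or_ge e d with hed | hde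
  · rw [homogeneousComponent_mul_of_lt hg q hed]
    exact J.zero_mem
  obtain ⟨j, rfl⟩ := Nat.exists_eq_add_of_le hde
  rw [homogeneousComponent_add_mul hg]
  rcases lt_or_ge j 2 with hj | hj
  · rw [homogeneousComponent_eq_zero_of_mem_pow_idealOfVars hq hj, mul_zero]
    exact J.zero_mem
  refine hmax (d + j) (by omega) _ (hg.mul (homogeneousComponent_isHomogeneous j q)) ?_
  have hcomp : ℓ * (g * homogeneousComponent j q) =
      homogeneousComponent (1 + (d + j)) (ℓ * g * q) := by
    rw [mul_assoc, homogeneousComponent_add_mul hℓ, homogeneousComponent_add_mul hg]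
  rw [hcomp, ← coe_decompose_homogeneousSubmodule]
  exact hmJ.mem_iff.mp (Ideal.mul_mem_right q _ hℓg) _

end CommSemiring

section CommRing

variable {σ R : Type*} [CommRing R]

local notation "𝔪" => idealOfVars σ R

theorem sub_homogeneousComponent_one_mem_sq {y : MvPolynomial σ R} (hy : y ∈ 𝔪) :
    y - homogeneousComponent 1 y ∈ 𝔪 ^ 2 := by
  rw [mem_pow_idealOfVars_iff']
  intro x hx
  rw [coeff_sub, coeff_homogeneousComponent]
  split_ifs with h1
  · exact sub_self _
  · rw [sub_zero]
    exact (mem_pow_idealOfVars_iff' 1 y).mp (by rwa [pow_one]) x (by omega)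

theorem idealOfVars_mul_colon_ne {J : Ideal (MvPolynomial σ R)}
    (hJ : J.IsHomogeneous (homogeneousSubmodule σ R)) {p : ℕ} (hpJ : 𝔪 ^ p ≤ J)
    {y f : MvPolynomial σ R} {s : ℕ} (hy : y ∈ 𝔪) (hf : f.IsHomogeneous s) (hfJ : f ∉ J)
    (hℓf : homogeneousComponent 1 y * f ∈ 𝔪 * J) :
    (𝔪 * J).colon (Ideal.span {y}) ≠ J := by
  intro hcolon
  set ℓ := homogeneousComponent 1 y
  let P (d : ℕ) : Prop := ∃ g : MvPolynomial σ R, g.IsHomogeneous d ∧ g ∉ J ∧ ℓ * g ∈ 𝔪 * J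
  have hP : ∀ d, P d → d < p := fun d ⟨g, hg, hgJ, _⟩ =>
    not_le.mp fun hpd => hgJ (hpJ (hg.mem_pow_idealOfVars hpd))
  obtain ⟨d, ⟨g, hg, hgJ, hℓg⟩, hmax⟩ :=
    Set.exists_max_image {d | P d} id ((Set.finite_Iio p).subset hP) ⟨s, f, hf, hfJ, hℓf⟩
  have hq := sub_homogeneousComponent_one_mem_sq hy
  have hgq : g * (y - ℓ) ∈ J :=
    mul_mem_of_forall_gt hJ (homogeneousComponent_isHomogeneous 1 y) hq hg hℓg
      fun e hde h hh hℓh => by_contra fun hhJ => (hmax e ⟨h, hh, hhJ, hℓh⟩).not_gt hde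
  exact hgJ (Ideal.mem_of_mul_colon_eq hcolon hy (add_sub_cancel ℓ y).symm hq hℓg hgq)

theorem idealOfVars_mul_colon_ne_sup_pow {I : Ideal (MvPolynomial σ R)}
    (hI : I.IsHomogeneous (homogeneousSubmodule σ R)) {p s : ℕ} (hsp : s < p)
    {y f : MvPolynomial σ R} (hy : y ∈ 𝔪) (hf : f.IsHomogeneous s) (hfI : f ∉ I)
    (hℓf : homogeneousComponent 1 y * f ∈ 𝔪 * I) :
    (𝔪 * (I ⊔ 𝔪 ^ p)).colon (Ideal.span {y}) ≠ I ⊔ 𝔪 ^ p := by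
  refine idealOfVars_mul_colon_ne (hI.sup (isHomogeneous_pow_idealOfVars p)) le_sup_right hy hf
    ?_ (Ideal.mul_mono_right le_sup_left hℓf)
  intro hfJ
  obtain ⟨a, ha, b, hb, rfl⟩ := Submodule.mem_sup.mp hfJ
  apply hfI
  rw [← homogeneousComponent_eq_self hf, map_add,
    homogeneousComponent_eq_zero_of_mem_pow_idealOfVars hb hsp, add_zero]
  exact homogeneousComponent_mem_of_mem hI ha s

end CommRing

end MvPolynomial

theorem stmt2_general {K : Type*} [Field K] {n : ℕ} (I : Ideal (MvPolynomial (Fin n) K))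
    (hI : IsHomog I)
    (p : ℕ)
    (s : ℕ) (hsp : s < p)
    (hnogen : ∀ f ∈ I, f.IsHomogeneous (s + 1) → f ∈ mm K n * I)
    (hnoninj : ∀ y : MvPolynomial (Fin n) K, y.IsHomogeneous 1 →
      ∃ f : MvPolynomial (Fin n) K, f.IsHomogeneous s ∧ f ∉ I ∧ y * f ∈ I) :
    ¬ IsMFull (mm K n) (I + mm K n ^ p) := by
  rintro ⟨y, hy, hcolon⟩
  have hℓ := homogeneousComponent_isHomogeneous 1 y
  obtain ⟨f, hf, hfI, hℓfI⟩ := hnoninj _ hℓ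
  have hℓf : _ ∈ mm K n * I := hnogen _ hℓfI (by simpa only [add_comm] using hℓ.mul hf)
  exact MvPolynomial.idealOfVars_mul_colon_ne_sup_pow hI.isHomogeneous hsp hy hf hfI hℓf hcolon

/-- If `dim_K A_p` is the maximal value of the Hilbert function of `A = S/I`,
`s < p`, `I` has no minimal generators in degree `s+1` (i.e. `I_{s+1} = (mI)_{s+1}`),
and multiplication `A_s → A_{s+1}` by any linear form is non-injective,
then `I + m^p` is not `m`-full. -/
theorem stmt2 {K : Type*} [Field K] {n : ℕ} (I : Ideal (MvPolynomial (Fin n) K))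
    (hI : IsHomog I) [FiniteDimensional K (MvPolynomial (Fin n) K ⧸ I)]
    (p : ℕ) (hp : hdim K n I p = sSup (Set.range (hdim K n I)))
    (s : ℕ) (hsp : s < p)
    (hnogen : ∀ f ∈ I, f.IsHomogeneous (s + 1) → f ∈ mm K n * I)
    (hnoninj : ∀ y : MvPolynomial (Fin n) K, y.IsHomogeneous 1 →
      ∃ f : MvPolynomial (Fin n) K, f.IsHomogeneous s ∧ f ∉ I ∧ y * f ∈ I) :
    ¬ IsMFull (mm K n) (I + mm K n ^ p) :=
  stmt2_general I hI p s hsp hnogen hnoninj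
end

section
/- If a finite ranked poset P has the LYM property, then P has the Sperner property: the maximum size of an antichain of P equals the maximum of #P_k over all k. -/
open scoped Classical

/-!
Since rank goes up by one along covers, it is strictly monotone, so every level is an antichain.
Conversely, if `M` is the largest level size, LYM gives `#A / M ≤ ∑ a ∈ A, 1 / #P_{rank a} ≤ 1`.
-/

open Finset

theorem StrictMono.isAntichain_preimage_singleton {α β : Type*} [PartialOrder α] [Preorder β]
    {f : α → β} (hf : StrictMono f) (b : β) : IsAntichain (· ≤ ·) (f ⁻¹' {b}) :=
  fun _ hx _ hy hne (hle : _ ≤ _) => (hf (hle.lt_of_ne hne)).ne (hx.trans hy.symm)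

theorem Finset.card_le_of_sum_one_div_le_one {ι 𝕜 : Type*} [Field 𝕜] [LinearOrder 𝕜]
    [IsStrictOrderedRing 𝕜] {A : Finset ι} {w : ι → ℕ} {M : ℕ}
    (hw_pos : ∀ a ∈ A, 0 < w a) (hw_le : ∀ a ∈ A, w a ≤ M)
    (hsum : ∑ a ∈ A, (1 : 𝕜) / w a ≤ 1) : #A ≤ M := by
  obtain rfl | ⟨a, ha⟩ := A.eq_empty_or_nonempty
  · exact Nat.zero_le M
  have hM : (0 : 𝕜) < M := by exact_mod_cast (hw_pos a ha).trans_le (hw_le a ha)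
  have hdiv : (#A : 𝕜) / M ≤ 1 :=
    calc (#A : 𝕜) / M = ∑ _ ∈ A, (1 : 𝕜) / M := by rw [sum_const, nsmul_eq_mul, mul_one_div]
      _ ≤ ∑ a ∈ A, (1 : 𝕜) / w a := sum_le_sum fun a ha =>
          one_div_le_one_div_of_le (by exact_mod_cast hw_pos a ha) (by exact_mod_cast hw_le a ha)
      _ ≤ 1 := hsum
  exact_mod_cast (div_le_one hM).1 hdiv

/-- If a finite ranked poset has the LYM property, then it has the Sperner
property: the maximal size of an antichain equals the maximal size of a rank
level. -/
theorem stmt7 {P : Type*} [Fintype P] [PartialOrder P]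
    (rank : P → ℕ) (hrank : ∀ a b : P, a ⋖ b → rank b = rank a + 1)
    (lvl : ℕ → Finset P) (hlvl : ∀ k, lvl k = Finset.univ.filter (fun a => rank a = k))
    (hLYM : ∀ A : Finset P, IsAntichain (· ≤ ·) (A : Set P) →
      ∑ a ∈ A, (1 : ℚ) / (lvl (rank a)).card ≤ 1) :
    sSup {m | ∃ A : Finset P, IsAntichain (· ≤ ·) (A : Set P) ∧ A.card = m}
      = sSup (Set.range fun k => (lvl k).card) := by
  let := Fintype.toLocallyFiniteOrder (α := P)
  have hmono : StrictMono rank :=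
    (strictMono_iff_forall_covBy rank).2 fun a b h => by rw [hrank a b h]; exact Nat.lt_succ_self _
  have hmem : ∀ a, a ∈ lvl (rank a) := by simp [hlvl]
  have hbdd : BddAbove (Set.range fun k => #(lvl k)) :=
    ⟨Fintype.card P, by rintro _ ⟨k, rfl⟩; exact card_le_univ _⟩
  obtain ⟨k, hk⟩ := Nat.sSup_mem (Set.range_nonempty _) hbdd
  refine IsGreatest.csSup_eq ⟨⟨lvl k, ?_, hk⟩, ?_⟩
  · simp only [hlvl, coe_filter, mem_univ, true_and]
    exact hmono.isAntichain_preimage_singleton k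
  · rintro _ ⟨A, hA, rfl⟩
    exact card_le_of_sum_one_div_le_one (fun a _ => card_pos.2 ⟨a, hmem a⟩)
      (fun a _ => le_csSup hbdd ⟨rank a, rfl⟩) (hLYM A hA)
end

section
/- Let A = S/I be a monomial Artinian K-algebra and k a positive integer. If there exists a linear form y ∈ S such that the multiplication map ×y : A_{k−1} → A_k is injective or surjective, then A has a full matching at degree k. -/
/-
Write `T` for the matrix of `×y : A_{k-1} → A_k` in the bases of standard monomials. An entry
`T b a`, the coefficient of `x^b` in `y x^a`, can only be nonzero when `x^a ∣ x^b`. Injectivity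
(surjectivity) of `×y` makes the columns (rows) of `T` linearly independent, and then every `s`
columns (rows) have nonzero entries in at least `s` rows (columns), since restricted to those rows
they remain independent. Hall's theorem turns this into an injection along nonzero entries, that
is, a matching of the smaller side into the larger one along divisibility.
-/

open MvPolynomial

/-- `S/I` has a full matching at degree `k`: a matching in the bipartite graph
on `M_{k-1}(A) × M_k(A)` given by divisibility, of the maximal possible size
`min(#M_{k-1}(A), #M_k(A))`. -/
def HasFullMatching (K : Type*) [Field K] {n : ℕ}
    (I : Ideal (MvPolynomial (Fin n) K)) (k : ℕ) : Prop :=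
  ∃ M : Finset ((Fin n →₀ ℕ) × (Fin n →₀ ℕ)),
    (∀ q ∈ M, q.1 ∈ MSet K I (k - 1) ∧ q.2 ∈ MSet K I k ∧ q.1 ≤ q.2) ∧
    (∀ q ∈ M, ∀ q' ∈ M, q ≠ q' → q.1 ≠ q'.1 ∧ q.2 ≠ q'.2) ∧
    M.card = min (MSet K I (k - 1)).ncard (MSet K I k).ncard

open Function Finset Matrix

theorem Matrix.exists_injective_ne_zero_of_linearIndependent_transpose
    {m n R : Type*} [Finite m] [Finite n] [Ring R] [StrongRankCondition R]
    {M : Matrix m n R} (hM : LinearIndependent R Mᵀ) :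
    ∃ f : n → m, Injective f ∧ ∀ j, M (f j) j ≠ 0 := by
  classical
  cases nonempty_fintype m
  refine (Fintype.all_card_le_filter_rel_iff_exists_injective (fun j i => M i j ≠ 0)).mp
    fun A => ?_
  set N : Finset m := {i | ∃ j ∈ A, M i j ≠ 0}
  have hcol : ∀ j : A, ExtendByZero.linearMap R (Subtype.val : N → m) (fun i => M i j) =
      Mᵀ j := by
    intro j
    ext i
    by_cases hi : i ∈ N
    · simpa using Subtype.val_injective.extend_apply (fun i : N => M i j) 0 ⟨i, hi⟩
    · have hi' : ¬∃ c : N, (c : m) = i := fun ⟨c, hc⟩ => hi (hc ▸ c.2)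
      simp only [N, mem_filter, mem_univ, true_and, not_exists, not_and, not_not] at hi
      simp [extend_apply' _ _ _ hi', hi j j.2]
  have hind : LinearIndependent R fun (j : A) (i : N) => M i j := by
    refine .of_comp (ExtendByZero.linearMap R (Subtype.val : N → m)) ?_
    convert hM.comp _ Subtype.val_injective using 1
    exact funext hcol
  simpa using hind.fintype_card_le_finrank

theorem Matrix.exists_injective_ne_zero_of_linearIndependent
    {m n R : Type*} [Finite m] [Finite n] [Ring R] [StrongRankCondition R]
    {M : Matrix m n R} (hM : LinearIndependent R M) :
    ∃ f : m → n, Injective f ∧ ∀ i, M i (f i) ≠ 0 :=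
  exists_injective_ne_zero_of_linearIndependent_transpose (M := Mᵀ) hM

section MonomialAlgebra

variable {K : Type*} [Field K] {n : ℕ} {I : Ideal (MvPolynomial (Fin n) K)}

theorem mdeg_eq_degree (d : Fin n →₀ ℕ) : mdeg d = d.degree := rfl

noncomputable instance MSet.fintype (K : Type*) [Field K] (I : Ideal (MvPolynomial (Fin n) K))
    (k : ℕ) : Fintype (MSet K I k) :=
  ((Finsupp.finite_of_degree_le k).subset fun _ hd => hd.1.le).fintype

theorem mem_of_forall_mem_support_monomial_mem {f : MvPolynomial (Fin n) K}
    (h : ∀ d ∈ f.support, monomial d (1 : K) ∈ I) : f ∈ I := by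
  rw [f.as_sum]
  refine Ideal.sum_mem _ fun d hd => ?_
  simpa only [C_mul_monomial, mul_one] using I.mul_mem_left (C (coeff d f)) (h d hd)

theorem MvPolynomial.IsHomogeneous.mdeg_eq {f : MvPolynomial (Fin n) K} {k : ℕ}
    (hf : f.IsHomogeneous k) {d : Fin n →₀ ℕ} (hd : d ∈ f.support) : mdeg d = k := by
  rw [mdeg_eq_degree, Finsupp.degree_eq_weight_one]
  exact hf (mem_support_iff.mp hd)

theorem mem_of_isHomogeneous_of_forall_coeff_eq_zero {f : MvPolynomial (Fin n) K} {k : ℕ}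
    (hf : f.IsHomogeneous k) (h : ∀ b : MSet K I k, coeff (b : Fin n →₀ ℕ) f = 0) : f ∈ I := by
  refine mem_of_forall_mem_support_monomial_mem fun d hd => ?_
  by_contra hdI
  exact mem_support_iff.mp hd (h ⟨d, hf.mdeg_eq hd, hdI⟩)

theorem IsMonomialIdeal.coeff_eq_zero_of_mem (hI : IsMonomialIdeal I)
    {f : MvPolynomial (Fin n) K} (hf : f ∈ I) {d : Fin n →₀ ℕ} (hd : monomial d (1 : K) ∉ I) :
    coeff d f = 0 :=
  notMem_support_iff.mp fun hmem => hd (hI f hf d hmem)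

noncomputable def mulMatrix (I : Ideal (MvPolynomial (Fin n) K)) (y : MvPolynomial (Fin n) K)
    (i j : ℕ) :
    Matrix (MSet K I j) (MSet K I i) K :=
  fun b a => coeff (b : Fin n →₀ ℕ) (y * monomial (a : Fin n →₀ ℕ) 1)

variable {y : MvPolynomial (Fin n) K} {i j : ℕ}

theorem le_of_mulMatrix_ne_zero {b : MSet K I j} {a : MSet K I i}
    (h : mulMatrix I y i j b a ≠ 0) : (a : Fin n →₀ ℕ) ≤ b := by
  by_contra hab
  exact h (by simp [mulMatrix, coeff_mul_monomial', hab])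

theorem coeff_mul_sum_smul_monomial (g : MSet K I i → K) (b : MSet K I j) :
    coeff (b : Fin n →₀ ℕ) (y * ∑ a, g a • monomial (a : Fin n →₀ ℕ) 1) =
      ∑ a, g a * mulMatrix I y i j b a := by
  simp only [mul_sum, mul_smul_comm, coeff_sum, coeff_smul, smul_eq_mul, mulMatrix]

theorem linearIndependent_mulMatrix_transpose (hI : IsMonomialIdeal I) {e : ℕ}
    (hy : y.IsHomogeneous e) (hij : i + e = j)
    (hinj : ∀ f : MvPolynomial (Fin n) K, f.IsHomogeneous i → y * f ∈ I → f ∈ I) :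
    LinearIndependent K (mulMatrix I y i j)ᵀ := by
  refine Fintype.linearIndependent_iff.mpr fun g hg a₀ => ?_
  set F : MvPolynomial (Fin n) K := ∑ a, g a • monomial (a : Fin n →₀ ℕ) 1 with hFdef
  have hFcoeff : coeff (a₀ : Fin n →₀ ℕ) F = g a₀ := by
    rw [coeff_sum, Fintype.sum_eq_single a₀]
    · simp
    · intro a ha
      simp [coeff_monomial, Subtype.val_injective.ne ha]
  have hF : F.IsHomogeneous i := by
    refine (mem_homogeneousSubmodule i F).mp (Submodule.sum_mem _ fun a _ => ?_)
    exact Submodule.smul_mem _ _ ((mem_homogeneousSubmodule _ _).mpr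
      (isHomogeneous_monomial 1 a.2.1))
  have hyF : y * F ∈ I := by
    refine mem_of_isHomogeneous_of_forall_coeff_eq_zero (k := j)
      (hij ▸ add_comm e i ▸ hy.mul hF) fun b => ?_
    rw [hFdef, coeff_mul_sum_smul_monomial]
    simpa using congrFun hg b
  rw [← hFcoeff]
  exact hI.coeff_eq_zero_of_mem (hinj F hF hyF) a₀.2.2

theorem linearIndependent_mulMatrix (hI : IsMonomialIdeal I)
    (hsurj : ∀ g : MvPolynomial (Fin n) K, g.IsHomogeneous j →
      ∃ f : MvPolynomial (Fin n) K, f.IsHomogeneous i ∧ g - y * f ∈ I) :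
    LinearIndependent K (mulMatrix I y i j) := by
  refine Fintype.linearIndependent_iff.mpr fun g hg b₀ => ?_
  -- `ψ` vanishes on `I` and on `y * S_i`, while `x^b₀ ∈ y * S_i + I` and `ψ x^b₀ = g b₀`
  let ψ : MvPolynomial (Fin n) K →ₗ[K] K := ∑ b, g b • lcoeff K (b : Fin n →₀ ℕ)
  have hψ : ∀ h, ψ h = ∑ b, g b * coeff (b : Fin n →₀ ℕ) h := by simp [ψ]
  have hψI : ∀ h ∈ I, ψ h = 0 := fun h hh => by
    simp [hψ, fun b : MSet K I j => hI.coeff_eq_zero_of_mem hh b.2.2]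
  have hψmonomial : ∀ a, mdeg a = i → ψ (y * monomial a 1) = 0 := by
    intro a ha
    by_cases haI : monomial a (1 : K) ∈ I
    · exact hψI _ (I.mul_mem_left y haI)
    · simpa [hψ, mulMatrix] using congrFun hg ⟨a, ha, haI⟩
  have hψmul : ∀ f : MvPolynomial (Fin n) K, f.IsHomogeneous i → ψ (y * f) = 0 := by
    intro f hf
    rw [f.as_sum, mul_sum, map_sum]
    refine sum_eq_zero fun a ha => ?_
    have hsmul : monomial a (coeff a f) = coeff a f • monomial a 1 := by
      rw [smul_monomial, smul_eq_mul, mul_one]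
    rw [hsmul, mul_smul_comm, map_smul, hψmonomial a (hf.mdeg_eq ha), smul_zero]
  obtain ⟨f, hf, hdiff⟩ := hsurj _ (isHomogeneous_monomial (1 : K) b₀.2.1)
  calc g b₀ = ψ (monomial (b₀ : Fin n →₀ ℕ) 1) := by
        rw [hψ, Fintype.sum_eq_single b₀]
        · simp
        · intro b hb
          simp [coeff_monomial, Subtype.val_injective.ne hb.symm]
    _ = ψ (monomial (b₀ : Fin n →₀ ℕ) 1 - y * f) + ψ (y * f) := by rw [map_sub, sub_add_cancel]
    _ = 0 := by rw [hψI _ hdiff, hψmul f hf, add_zero]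

theorem hasFullMatching_of_injective {k : ℕ} {ι : Type*} [Finite ι]
    (p : ι → MSet K I (k - 1)) (q : ι → MSet K I k) (hp : Injective p) (hq : Injective q)
    (hpq : ∀ x, (p x : Fin n →₀ ℕ) ≤ q x)
    (hcard : Nat.card ι = min (MSet K I (k - 1)).ncard (MSet K I k).ncard) :
    HasFullMatching K I k := by
  classical
  cases nonempty_fintype ι
  refine ⟨univ.image fun x => ((p x : Fin n →₀ ℕ), (q x : Fin n →₀ ℕ)), ?_, ?_, ?_⟩
  · simp only [mem_image, mem_univ, true_and]
    rintro _ ⟨x, rfl⟩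
    exact ⟨(p x).2, (q x).2, hpq x⟩
  · simp only [mem_image, mem_univ, true_and]
    rintro _ ⟨x, rfl⟩ _ ⟨x', rfl⟩ hne
    have hxx' : x ≠ x' := by rintro rfl; exact hne rfl
    exact ⟨fun h => hxx' (hp (Subtype.ext h)), fun h => hxx' (hq (Subtype.ext h))⟩
  · rw [card_image_of_injective _ fun x x' h => hp (Subtype.ext (congrArg Prod.fst h)), card_univ,
      ← Nat.card_eq_fintype_card, hcard]

end MonomialAlgebra

theorem stmt9_general {K : Type*} [Field K] {n : ℕ} (I : Ideal (MvPolynomial (Fin n) K))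
    (hmon : IsMonomialIdeal I)
    (k : ℕ) (hk : 0 < k)
    (hy : ∃ y : MvPolynomial (Fin n) K, y.IsHomogeneous 1 ∧
      ((∀ f : MvPolynomial (Fin n) K, f.IsHomogeneous (k - 1) → y * f ∈ I → f ∈ I) ∨
       (∀ g : MvPolynomial (Fin n) K, g.IsHomogeneous k →
         ∃ f : MvPolynomial (Fin n) K, f.IsHomogeneous (k - 1) ∧ g - y * f ∈ I))) :
    HasFullMatching K I k := by
  obtain ⟨y, hy, hinj | hsurj⟩ := hy
  · obtain ⟨f, hf, hne⟩ := exists_injective_ne_zero_of_linearIndependent_transpose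
      (linearIndependent_mulMatrix_transpose hmon hy (Nat.sub_add_cancel hk) hinj)
    refine hasFullMatching_of_injective id f injective_id hf
      (fun a => le_of_mulMatrix_ne_zero (hne a)) ?_
    exact (min_eq_left (Nat.card_le_card_of_injective f hf)).symm
  · obtain ⟨g, hg, hne⟩ := exists_injective_ne_zero_of_linearIndependent
      (linearIndependent_mulMatrix hmon hsurj)
    refine hasFullMatching_of_injective g id hg injective_id
      (fun b => le_of_mulMatrix_ne_zero (hne b)) ?_
    exact (min_eq_right (Nat.card_le_card_of_injective g hg)).symm

/-- If for a monomial Artinian algebra `A = S/I` there is a linear form `y` such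
that multiplication `×y : A_{k-1} → A_k` is injective or surjective, then `A`
has a full matching at degree `k`. -/
theorem stmt9 {K : Type*} [Field K] {n : ℕ} (I : Ideal (MvPolynomial (Fin n) K))
    (hmon : IsMonomialIdeal I) [FiniteDimensional K (MvPolynomial (Fin n) K ⧸ I)]
    (k : ℕ) (hk : 0 < k)
    (hy : ∃ y : MvPolynomial (Fin n) K, y.IsHomogeneous 1 ∧
      ((∀ f : MvPolynomial (Fin n) K, f.IsHomogeneous (k - 1) → y * f ∈ I → f ∈ I) ∨
       (∀ g : MvPolynomial (Fin n) K, g.IsHomogeneous k →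
         ∃ f : MvPolynomial (Fin n) K, f.IsHomogeneous (k - 1) ∧ g - y * f ∈ I))) :
    HasFullMatching K I k :=
  stmt9_general I hmon k hk hy
end

section
/- For a monomial Artinian K-algebra A = S/I, the algebra A has the Sperner property if and only if the divisibility poset M(A) of monomials not in I has the Sperner property. -/
open MvPolynomial

/-!
Every element of `A = S ⧸ I` has a unique representative supported on standard monomials (those
outside `I`), so a monomial order gives each nonzero `a ∈ A` a leading exponent, which is standard.
For an ideal `J` of `A`, the minimal leading exponents of its elements form an antichain `F` of
`M(A)`, and by the division algorithm elements of `J` with these leading exponents generate `J`;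
hence `μ(J) ≤ |F|`. Conversely, the monomials of an antichain `F` generate an ideal `J_F` with
`μ(J_F) ≥ |F|`: because `F` is an antichain, no element of `𝔪 J_F` has a coefficient on `F`, so the
monomials of `F` stay linearly independent modulo `𝔪 J_F`, while any generating set of `J_F` spans
`J_F` modulo `𝔪 J_F` over `K = A ⧸ 𝔪`. So the largest `μ(J)` is the largest antichain, and
`dim_K A_k` is the number of standard monomials of degree `k`.
-/

theorem Ideal.restrictScalars_span_le_mul_sup_span {K A : Type*} [CommSemiring K] [CommRing A]
    [Algebra K A] (M : Ideal A) (hM : ∀ a : A, ∃ c : K, a - algebraMap K A c ∈ M) (s : Set A) :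
    (Ideal.span s).restrictScalars K ≤
      (M * Ideal.span s).restrictScalars K ⊔ Submodule.span K s := by
  intro x hx
  rw [Submodule.restrictScalars_mem] at hx
  induction hx using Submodule.span_induction with
  | mem x hx => exact Submodule.mem_sup_right (Submodule.subset_span hx)
  | zero => exact zero_mem _
  | add x y _ _ hx hy => exact add_mem hx hy
  | smul a x hxs hx =>
    obtain ⟨c, hc⟩ := hM a
    have hsplit : a • x = c • x + (a - algebraMap K A c) * x := by
      rw [smul_eq_mul, Algebra.smul_def]; ring
    rw [hsplit]
    exact add_mem (Submodule.smul_mem _ c hx) (Submodule.mem_sup_left (Ideal.mul_mem_mul hc hxs))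

theorem Ideal.card_le_card_of_mul_span_le_ker {K A V ι : Type*} [Field K] [CommRing A]
    [Algebra K A] [AddCommGroup V] [Module K V] [Fintype ι]
    (M : Ideal A) (hM : ∀ a : A, ∃ c : K, a - algebraMap K A c ∈ M) (s : Finset A)
    (Φ : A →ₗ[K] V) (hΦ : (M * Ideal.span (s : Set A)).restrictScalars K ≤ LinearMap.ker Φ)
    (v : ι → A) (hv : ∀ i, v i ∈ Ideal.span (s : Set A)) (hli : LinearIndependent K (Φ ∘ v)) :
    Fintype.card ι ≤ s.card := by
  classical
  have hrange : Set.range (Φ ∘ v) ≤ Submodule.span K ((s.image Φ : Finset V) : Set V) := by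
    rintro _ ⟨i, rfl⟩
    obtain ⟨y, hy, z, hz, hyz⟩ :=
      Submodule.mem_sup.1 (Ideal.restrictScalars_span_le_mul_sup_span M hM _ (hv i))
    rw [Function.comp_apply, ← hyz, map_add, LinearMap.mem_ker.1 (hΦ hy), zero_add,
      Finset.coe_image, ← Submodule.map_span]
    exact Submodule.mem_map_of_mem hz
  calc Fintype.card ι ≤ Fintype.card ((s.image Φ : Finset V) : Set V) :=
        linearIndependent_le_span_aux' _ hli _ hrange
    _ = (s.image Φ).card := by simp
    _ ≤ s.card := Finset.card_image_le

theorem MvPolynomial.coeff_eq_zero_of_mem_span_X_mul_span_monomial {σ R : Type*}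
    [CommSemiring R] {F : Set (σ →₀ ℕ)} (hF : IsAntichain (· ≤ ·) F) {f : MvPolynomial σ R}
    (hf : f ∈ Ideal.span (Set.range X) * Ideal.span ((fun d => monomial d (1 : R)) '' F))
    {d : σ →₀ ℕ} (hd : d ∈ F) : coeff d f = 0 := by
  have hle : Ideal.span (Set.range X) * Ideal.span ((fun d => monomial d (1 : R)) '' F) ≤
      Ideal.span ((fun d => monomial d (1 : R)) '' {u | ∃ e ∈ F, e < u}) := by
    rw [Ideal.span_mul_span', Ideal.span_le]
    rintro _ ⟨_, ⟨i, rfl⟩, _, ⟨e, he, rfl⟩, rfl⟩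
    refine Ideal.subset_span ⟨e + Finsupp.single i 1, ⟨e, he, ?_⟩, ?_⟩
    · exact lt_add_of_pos_right e (pos_iff_ne_zero.2 (Finsupp.single_ne_zero.2 one_ne_zero))
    · dsimp only
      rw [X, monomial_mul, one_mul, add_comm]
  by_contra hfd
  obtain ⟨u, ⟨e, he, heu⟩, hud⟩ :=
    mem_ideal_span_monomial_image.1 (hle hf) d (mem_support_iff.2 hfd)
  exact hF he hd (heu.trans_le hud).ne (heu.le.trans hud)

section MonomialQuotient

variable {K : Type*} [Field K] {n : ℕ} {I : Ideal (MvPolynomial (Fin n) K)}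

theorem exists_sub_algebraMap_mem_map_mm (a : MvPolynomial (Fin n) K ⧸ I) :
    ∃ c : K, a - algebraMap K _ c ∈ (mm K n).map (Ideal.Quotient.mk I) := by
  obtain ⟨f, rfl⟩ := Ideal.Quotient.mk_surjective a
  refine ⟨constantCoeff f, ?_⟩
  rw [← Ideal.Quotient.mk_algebraMap, ← map_sub]
  refine Ideal.mem_map_of_mem _ ?_
  rw [mm, ← Set.image_univ, mem_ideal_span_X_image]
  intro d hd
  by_contra! h
  obtain rfl : d = 0 := Finsupp.ext fun i => h i trivial
  simp [MvPolynomial.algebraMap_eq, ← constantCoeff_eq] at hd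

variable (I) in
def stdExps : Set (Fin n →₀ ℕ) := {d | monomial d (1 : K) ∉ I}

theorem exists_mem_restrictSupport_mk_eq (f : MvPolynomial (Fin n) K) :
    ∃ g ∈ restrictSupport K (stdExps I), Ideal.Quotient.mk I g = Ideal.Quotient.mk I f := by
  induction f using MvPolynomial.induction_on' with
  | monomial d c =>
    by_cases hd : d ∈ stdExps I
    · refine ⟨monomial d c, ?_, rfl⟩
      rw [mem_restrictSupport_iff]
      exact (Finset.coe_subset.2 support_monomial_subset).trans (by simpa using hd)
    · refine ⟨0, zero_mem _, ?_⟩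
      rw [map_zero, eq_comm, Ideal.Quotient.eq_zero_iff_mem, ← mul_one c, ← C_mul_monomial]
      exact I.mul_mem_left _ (not_not.1 hd)
  | add p q hp hq =>
    obtain ⟨gp, hgp, hp⟩ := hp
    obtain ⟨gq, hgq, hq⟩ := hq
    exact ⟨gp + gq, add_mem hgp hgq, by rw [map_add, map_add, hp, hq]⟩

namespace IsMonomialIdeal

theorem coeff_eq_of_sub_mem (hI : IsMonomialIdeal I) {p q : MvPolynomial (Fin n) K}
    (h : p - q ∈ I) {d : Fin n →₀ ℕ} (hd : d ∈ stdExps I) : coeff d p = coeff d q := by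
  by_contra hne
  exact hd (hI _ h d (by rwa [mem_support_iff, coeff_sub, sub_ne_zero]))

theorem eq_zero_of_mem_restrictSupport (hI : IsMonomialIdeal I) {g : MvPolynomial (Fin n) K}
    (hg : g ∈ restrictSupport K (stdExps I)) (hgI : g ∈ I) : g = 0 := by
  ext d
  by_cases hd : d ∈ stdExps I
  · exact hI.coeff_eq_of_sub_mem (by rwa [sub_zero]) hd
  · exact notMem_support_iff.1 fun h => hd (hg h)

noncomputable def stdEquiv (hI : IsMonomialIdeal I) :
    restrictSupport K (stdExps I) ≃ₗ[K] MvPolynomial (Fin n) K ⧸ I :=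
  LinearEquiv.ofBijective
    ((Ideal.Quotient.mkₐ K I).toLinearMap ∘ₗ (restrictSupport K (stdExps I)).subtype)
    ⟨(injective_iff_map_eq_zero _).2 fun g hg =>
      Subtype.ext (hI.eq_zero_of_mem_restrictSupport g.2 (Ideal.Quotient.eq_zero_iff_mem.1 hg)),
    fun a => by
      obtain ⟨f, rfl⟩ := Ideal.Quotient.mk_surjective a
      obtain ⟨g, hg, hgf⟩ := exists_mem_restrictSupport_mk_eq (I := I) f
      exact ⟨⟨g, hg⟩, hgf⟩⟩

noncomputable def normalForm (hI : IsMonomialIdeal I) :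
    (MvPolynomial (Fin n) K ⧸ I) →ₗ[K] MvPolynomial (Fin n) K :=
  (restrictSupport K (stdExps I)).subtype ∘ₗ hI.stdEquiv.symm.toLinearMap

theorem mk_normalForm (hI : IsMonomialIdeal I) (a : MvPolynomial (Fin n) K ⧸ I) :
    Ideal.Quotient.mk I (hI.normalForm a) = a :=
  hI.stdEquiv.apply_symm_apply a

theorem normalForm_mk_of_mem_restrictSupport (hI : IsMonomialIdeal I)
    {g : MvPolynomial (Fin n) K} (hg : g ∈ restrictSupport K (stdExps I)) :
    hI.normalForm (Ideal.Quotient.mk I g) = g :=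
  congrArg Subtype.val (hI.stdEquiv.symm_apply_apply ⟨g, hg⟩)

theorem support_normalForm_subset (hI : IsMonomialIdeal I) (a : MvPolynomial (Fin n) K ⧸ I) :
    ↑(hI.normalForm a).support ⊆ stdExps I :=
  (hI.stdEquiv.symm a).2

theorem normalForm_ne_zero (hI : IsMonomialIdeal I) {a : MvPolynomial (Fin n) K ⧸ I}
    (ha : a ≠ 0) : hI.normalForm a ≠ 0 :=
  fun h => ha (by rw [← hI.mk_normalForm a, h, map_zero])

theorem coeff_normalForm_mk (hI : IsMonomialIdeal I) (f : MvPolynomial (Fin n) K)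
    {d : Fin n →₀ ℕ} (hd : d ∈ stdExps I) :
    coeff d (hI.normalForm (Ideal.Quotient.mk I f)) = coeff d f :=
  hI.coeff_eq_of_sub_mem (Ideal.Quotient.eq.1 (hI.mk_normalForm _)) hd

theorem support_normalForm_mk_subset (hI : IsMonomialIdeal I) (f : MvPolynomial (Fin n) K) :
    (hI.normalForm (Ideal.Quotient.mk I f)).support ⊆ f.support := fun d hd => by
  rw [mem_support_iff, ← hI.coeff_normalForm_mk f (hI.support_normalForm_subset _ hd)]
  exact mem_support_iff.1 hd

theorem linearIndependent_mk_monomial (hI : IsMonomialIdeal I) :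
    LinearIndependent K fun d : stdExps I => Ideal.Quotient.mk I (monomial d.1 (1 : K)) := by
  refine LinearIndependent.of_comp hI.normalForm ?_
  have hmon : ∀ d : stdExps I, monomial d.1 (1 : K) ∈ restrictSupport K (stdExps I) := fun d =>
    (Finset.coe_subset.2 support_monomial_subset).trans (by simp [d.2])
  have hcomp : hI.normalForm ∘ (fun d : stdExps I => Ideal.Quotient.mk I (monomial d.1 (1 : K))) =
      basisMonomials (Fin n) K ∘ Subtype.val := by
    ext1 d
    simp [hI.normalForm_mk_of_mem_restrictSupport (hmon d)]
  rw [hcomp]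
  exact (basisMonomials (Fin n) K).linearIndependent.comp _ Subtype.val_injective

theorem hdim_eq_ncard (hI : IsMonomialIdeal I) (k : ℕ) : hdim K n I k = (MSet K I k).ncard := by
  have : Fintype (MSet K I k) :=
    ((Finsupp.finite_of_degree_eq k).subset fun d hd => hd.1).fintype
  have hspan :
      Submodule.map (Ideal.Quotient.mkₐ K I).toLinearMap (homogeneousSubmodule (Fin n) K k) =
        Submodule.span K
          (Set.range fun d : MSet K I k => Ideal.Quotient.mk I (monomial d.1 1)) := by
    rw [homogeneousSubmodule_eq_finsupp_supported, AddMonoidAlgebra.supported_eq_span_single,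
      Submodule.map_span]
    refine le_antisymm (Submodule.span_le.2 ?_) (Submodule.span_le.2 ?_)
    · rintro _ ⟨_, ⟨d, hd, rfl⟩, rfl⟩
      by_cases hdI : monomial d (1 : K) ∈ I
      · simp [single_eq_monomial, Ideal.Quotient.eq_zero_iff_mem.2 hdI]
      · exact Submodule.subset_span ⟨⟨d, hd, hdI⟩, by simp [single_eq_monomial]⟩
    · rintro _ ⟨d, rfl⟩
      exact Submodule.subset_span ⟨_, ⟨d.1, d.2.1, rfl⟩, by simp [single_eq_monomial]⟩
  have hli :
      LinearIndependent K fun d : MSet K I k => Ideal.Quotient.mk I (monomial d.1 (1 : K)) :=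
    hI.linearIndependent_mk_monomial.comp (Set.inclusion fun d hd => hd.2)
      (Set.inclusion_injective _)
  rw [hdim, hspan, finrank_span_eq_card hli, Set.ncard_eq_toFinset_card', Set.toFinset_card]

theorem card_le_mu_span_monomial (hI : IsMonomialIdeal I) {F : Finset (Fin n →₀ ℕ)}
    (hFI : ∀ d ∈ F, monomial d (1 : K) ∉ I) (hF : IsAntichain (· ≤ ·) (F : Set (Fin n →₀ ℕ))) :
    F.card ≤ mu (Ideal.span ((fun d => Ideal.Quotient.mk I (monomial d (1 : K))) '' F)) := by
  classical
  refine le_csInf ⟨_, F.image _, rfl, by rw [Finset.coe_image]⟩ ?_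
  rintro _ ⟨s, rfl, hs⟩
  let Φ : (MvPolynomial (Fin n) K ⧸ I) →ₗ[K] (F → K) :=
    LinearMap.pi fun d => lcoeff K d.1 ∘ₗ hI.normalForm
  have hΦ : ((mm K n).map (Ideal.Quotient.mk I) * Ideal.span (s : Set _)).restrictScalars K ≤
      LinearMap.ker Φ := by
    intro x hx
    rw [Submodule.restrictScalars_mem, hs,
      ← Set.image_image (Ideal.Quotient.mk I) (fun d => monomial d (1 : K)), ← Ideal.map_span,
      ← Ideal.map_mul, Ideal.mem_map_iff_of_surjective _ Ideal.Quotient.mk_surjective] at hx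
    obtain ⟨f, hf, rfl⟩ := hx
    ext d
    simp [Φ, hI.coeff_normalForm_mk f (hFI d.1 d.2),
      coeff_eq_zero_of_mem_span_X_mul_span_monomial hF hf d.2]
  have hΦv : Φ ∘ (fun d : F => Ideal.Quotient.mk I (monomial d.1 (1 : K))) = Pi.basisFun K F := by
    ext d e
    simp only [Function.comp_apply, Pi.basisFun_apply, Φ, LinearMap.pi_apply,
      LinearMap.comp_apply, lcoeff_apply]
    rw [hI.coeff_normalForm_mk _ (hFI e.1 e.2), coeff_monomial, Pi.single_apply]
    by_cases hde : d = e
    · simp [hde]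
    · simp [hde, Ne.symm hde]
  rw [← Fintype.card_coe]
  exact Ideal.card_le_card_of_mul_span_le_ker _ exists_sub_algebraMap_mem_map_mm s Φ hΦ _
    (fun d => hs ▸ Ideal.subset_span ⟨d.1, d.2, rfl⟩) (hΦv ▸ (Pi.basisFun K F).linearIndependent)

theorem degree_normalForm_mem_stdExps (hI : IsMonomialIdeal I) (m : MonomialOrder (Fin n))
    {a : MvPolynomial (Fin n) K ⧸ I} (ha : a ≠ 0) : m.degree (hI.normalForm a) ∈ stdExps I :=
  hI.support_normalForm_subset a (m.degree_mem_support (hI.normalForm_ne_zero ha))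

/-- Dividing the normal form of `g ∈ J` by the normal forms of `G` leaves a remainder none of whose
monomials is divisible by a leading monomial of `G`; its image in `J` must therefore vanish. -/
theorem span_eq_of_forall_exists_degree_le (hI : IsMonomialIdeal I) (m : MonomialOrder (Fin n))
    {J : Ideal (MvPolynomial (Fin n) K ⧸ I)} {G : Set (MvPolynomial (Fin n) K ⧸ I)}
    (hGJ : G ⊆ J) (hG : ∀ b ∈ G, b ≠ 0)
    (hlead : ∀ g ∈ J, g ≠ 0 → ∃ b ∈ G, m.degree (hI.normalForm b) ≤ m.degree (hI.normalForm g)) :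
    Ideal.span G = J := by
  refine le_antisymm (Ideal.span_le.2 hGJ) fun g hg => ?_
  have hunit : ∀ p ∈ hI.normalForm '' G, IsUnit (m.leadingCoeff p) := by
    rintro _ ⟨b, hb, rfl⟩
    exact (m.leadingCoeff_ne_zero_iff.2 (hI.normalForm_ne_zero (hG b hb))).isUnit
  obtain ⟨q, r, hdiv, -, hr⟩ := m.div_set hunit (hI.normalForm g)
  set p := Finsupp.linearCombination _
    (fun b : hI.normalForm '' G => (b : MvPolynomial (Fin n) K)) q
  have hp : Ideal.Quotient.mk I p ∈ Ideal.span G := by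
    have hpS : p ∈ Ideal.span (hI.normalForm '' G) := by
      rw [← Subtype.range_coe (s := hI.normalForm '' G), Ideal.span,
        ← Finsupp.range_linearCombination]
      exact ⟨q, rfl⟩
    have := Ideal.mem_map_of_mem (Ideal.Quotient.mk I) hpS
    rwa [Ideal.map_span, Set.image_image, Set.image_congr fun b _ => hI.mk_normalForm b,
      Set.image_id'] at this
  have hg_eq : g = Ideal.Quotient.mk I p + Ideal.Quotient.mk I r := by
    rw [← map_add, ← hdiv, hI.mk_normalForm]
  by_cases hr0 : Ideal.Quotient.mk I r = 0
  · rw [hg_eq, hr0, add_zero]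
    exact hp
  have hrJ : Ideal.Quotient.mk I r ∈ J := by
    rw [eq_sub_of_add_eq' hg_eq.symm]
    exact J.sub_mem hg (Ideal.span_le.2 hGJ hp)
  obtain ⟨b, hbG, hb⟩ := hlead _ hrJ hr0
  have hdeg := hI.support_normalForm_mk_subset r (m.degree_mem_support (hI.normalForm_ne_zero hr0))
  exact (hr _ hdeg _ ⟨b, hbG, rfl⟩ hb).elim

theorem exists_antichain_mu_le (hI : IsMonomialIdeal I) (J : Ideal (MvPolynomial (Fin n) K ⧸ I)) :
    ∃ F : Finset (Fin n →₀ ℕ), (∀ d ∈ F, monomial d (1 : K) ∉ I) ∧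
      IsAntichain (· ≤ ·) (F : Set (Fin n →₀ ℕ)) ∧ mu J ≤ F.card := by
  classical
  let m : MonomialOrder (Fin n) := MonomialOrder.lex
  let L : Set (Fin n →₀ ℕ) := {v | ∃ g ∈ J, g ≠ 0 ∧ m.degree (hI.normalForm g) = v}
  have hfin : {v | Minimal (· ∈ L) v}.Finite :=
    WellQuasiOrderedLE.finite_of_isAntichain (setOfPred_minimal_antichain _)
  choose! lead hleadJ hlead0 hleaddeg using fun v (hv : v ∈ L) => hv
  refine ⟨hfin.toFinset, fun d hd => ?_, by simpa using setOfPred_minimal_antichain _, ?_⟩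
  · obtain ⟨g, -, hg0, rfl⟩ := (hfin.mem_toFinset.1 hd).prop
    exact hI.degree_normalForm_mem_stdExps m hg0
  have hspan : Ideal.span (hfin.toFinset.image lead : Set _) = J := by
    refine hI.span_eq_of_forall_exists_degree_le m ?_ ?_ fun g hg hg0 => ?_
    · intro b hb
      obtain ⟨v, hv, rfl⟩ := Finset.mem_image.1 hb
      exact hleadJ v (hfin.mem_toFinset.1 hv).prop
    · intro b hb
      obtain ⟨v, hv, rfl⟩ := Finset.mem_image.1 hb
      exact hlead0 v (hfin.mem_toFinset.1 hv).prop
    · obtain ⟨u, hu, humin⟩ := exists_minimal_le_of_wellFoundedLT (· ∈ L) _ ⟨g, hg, hg0, rfl⟩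
      exact ⟨lead u, Finset.mem_image_of_mem _ (hfin.mem_toFinset.2 humin),
        (hleaddeg u humin.prop).symm ▸ hu⟩
  calc mu J ≤ (hfin.toFinset.image lead).card := Nat.sInf_le ⟨_, rfl, hspan⟩
    _ ≤ hfin.toFinset.card := Finset.card_image_le

end IsMonomialIdeal

end MonomialQuotient

theorem stmt11_general {K : Type*} [Field K] {n : ℕ} (I : Ideal (MvPolynomial (Fin n) K))
    (hmon : IsMonomialIdeal I) :
    SpernerAlg I ↔
      sSup {m | ∃ F : Finset (Fin n →₀ ℕ), (∀ d ∈ F, (monomial d (1 : K)) ∉ I) ∧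
          IsAntichain (· ≤ ·) (F : Set (Fin n →₀ ℕ)) ∧ F.card = m}
        = sSup (Set.range fun k => (MSet K I k).ncard) := by
  have hmu : sSup {m | ∃ J : Ideal (MvPolynomial (Fin n) K ⧸ I), mu J = m} =
      sSup {m | ∃ F : Finset (Fin n →₀ ℕ), (∀ d ∈ F, (monomial d (1 : K)) ∉ I) ∧
          IsAntichain (· ≤ ·) (F : Set (Fin n →₀ ℕ)) ∧ F.card = m} := by
    apply csSup_eq_csSup_of_forall_exists_le
    · rintro _ ⟨J, rfl⟩
      obtain ⟨F, hFI, hF, hle⟩ := hmon.exists_antichain_mu_le J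
      exact ⟨F.card, ⟨F, hFI, hF, rfl⟩, hle⟩
    · rintro _ ⟨F, hFI, hF, rfl⟩
      exact ⟨_, ⟨_, rfl⟩, hmon.card_le_mu_span_monomial hFI hF⟩
  rw [SpernerAlg, hmu, funext hmon.hdim_eq_ncard]

/-- A monomial Artinian algebra `A = S/I` has the Sperner property if and only
if the divisibility poset of monomials outside `I` has the Sperner property
(the maximal size of an antichain equals the maximal size of a rank level). -/
theorem stmt11 {K : Type*} [Field K] {n : ℕ} (I : Ideal (MvPolynomial (Fin n) K))
    (hmon : IsMonomialIdeal I) [FiniteDimensional K (MvPolynomial (Fin n) K ⧸ I)] :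
    SpernerAlg I ↔
      sSup {m | ∃ F : Finset (Fin n →₀ ℕ), (∀ d ∈ F, (monomial d (1 : K)) ∉ I) ∧
          IsAntichain (· ≤ ·) (F : Set (Fin n →₀ ℕ)) ∧ F.card = m}
        = sSup (Set.range fun k => (MSet K I k).ncard) :=
  stmt11_general I hmon
end

section
/- Let N ≥ 5 and A = K[x₁,x₂]/(x₁^N, x₂^N, x₁^{N−2}x₂^{N−2}). The ranked poset M(A) of monomials not in the ideal, ordered by divisibility, is log-concave: (dim_K A_i)² ≥ (dim_K A_{i−1})(dim_K A_{i+1}) for all i. -/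
open MvPolynomial

open Finset

/-! The degree-`i` monomials of `K[x₁,x₂]` are the `x₁^a x₂^(i-a)` with `a ≤ i`, so the Hilbert
function of `A` counts the `a ≤ i` with `a, i - a < N` and not both `a, i - a ≥ N - 2`. This count
has a closed form, the sequence `1, 2, …, N, N - 1, …, 5, 4, 2, 0, 0, …`, which is concave up to
its last nonzero term; and for nonnegative terms `a + c ≤ 2b` forces `ac ≤ b²` by AM-GM. -/

noncomputable def biexp (a b : ℕ) : Fin 2 →₀ ℕ := Finsupp.single 0 a + Finsupp.single 1 b

@[simp] lemma biexp_apply_zero (a b : ℕ) : biexp a b 0 = a := by simp [biexp]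

@[simp] lemma biexp_apply_one (a b : ℕ) : biexp a b 1 = b := by simp [biexp]

lemma biexp_eta (d : Fin 2 →₀ ℕ) : biexp (d 0) (d 1) = d := by
  ext j
  fin_cases j <;> simp

lemma biexp_le_iff {a b : ℕ} {d : Fin 2 →₀ ℕ} : biexp a b ≤ d ↔ a ≤ d 0 ∧ b ≤ d 1 := by
  simp [Finsupp.le_def, Fin.forall_fin_two]

lemma mdeg_eq_add (d : Fin 2 →₀ ℕ) : mdeg d = d 0 + d 1 := by
  rw [mdeg, Finsupp.sum_fintype _ _ fun _ => rfl, Fin.sum_univ_two]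

lemma monomial_mem_span_X_pow_iff {K : Type*} [Field K] (p q r s : ℕ) (d : Fin 2 →₀ ℕ) :
    monomial d (1 : K) ∈ Ideal.span {X 0 ^ p, X 1 ^ q, X 0 ^ r * X 1 ^ s} ↔
      p ≤ d 0 ∨ q ≤ d 1 ∨ (r ≤ d 0 ∧ s ≤ d 1) := by
  have hgens : ({X 0 ^ p, X 1 ^ q, X 0 ^ r * X 1 ^ s} : Set (MvPolynomial (Fin 2) K)) =
      (fun e => monomial e 1) '' {biexp p 0, biexp 0 q, biexp r s} := by
    simp only [Set.image_insert_eq, Set.image_singleton, biexp, X_pow_eq_monomial, monomial_mul,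
      one_mul, Finsupp.single_zero, add_zero, zero_add]
  rw [hgens, mem_ideal_span_monomial_image]
  simp [biexp_le_iff]

lemma ncard_mset_eq_card_filter_range {K : Type*} [Field K]
    (I : Ideal (MvPolynomial (Fin 2) K)) (P : ℕ → ℕ → Prop) [DecidableRel P]
    (hI : ∀ d, monomial d (1 : K) ∈ I ↔ P (d 0) (d 1)) (i : ℕ) :
    (MSet K I i).ncard = #{a ∈ range (i + 1) | ¬P a (i - a)} := by
  have himage :
      MSet K I i = (fun a => biexp a (i - a)) '' ↑{a ∈ range (i + 1) | ¬P a (i - a)} := by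
    ext d
    simp only [MSet, Set.mem_ofPred_eq, mdeg_eq_add, hI, Set.mem_image, coe_filter, mem_range]
    constructor
    · rintro ⟨hdeg, hd⟩
      refine ⟨d 0, ⟨by omega, ?_⟩, ?_⟩
      · rwa [show i - d 0 = d 1 by omega]
      · rw [show i - d 0 = d 1 by omega, biexp_eta]
    · rintro ⟨a, ⟨ha, hP⟩, rfl⟩
      simp only [biexp_apply_zero, biexp_apply_one]
      exact ⟨by omega, hP⟩
  have hinj : Function.Injective fun a => biexp a (i - a) := fun a b hab => by
    simpa using congrArg (· 0) hab
  rw [himage, Set.ncard_image_of_injective _ hinj, Set.ncard_coe_finset]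

/-- For `N ≤ i`, of the `2N - 1 - i` monomials of degree `i` outside `(x₁^N, x₂^N)` exactly
`i + 5 - 2N` are multiples of `x₁^(N-2) x₂^(N-2)`; truncated subtraction makes both counts `0`
where they would be negative. -/
def hilbertFn (N i : ℕ) : ℕ := if i < N then i + 1 else (2 * N - 1 - i) - (i + 5 - 2 * N)

lemma card_filter_range_eq_hilbertFn {N : ℕ} (hN : 4 ≤ N) (i : ℕ) :
    #{a ∈ range (i + 1) | ¬(N ≤ a ∨ N ≤ i - a ∨ (N - 2 ≤ a ∧ N - 2 ≤ i - a))} =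
      hilbertFn N i := by
  set outer := Icc (i + 1 - N) (min i (N - 1))
  set inner := Icc (N - 2) (i - (N - 2))
  have hfilter : {a ∈ range (i + 1) | ¬(N ≤ a ∨ N ≤ i - a ∨ (N - 2 ≤ a ∧ N - 2 ≤ i - a))} =
      outer \ inner := by
    ext a
    simp only [outer, inner, mem_filter, mem_range, mem_sdiff, mem_Icc]
    omega
  have hinter :
      outer ∩ inner = Icc (max (i + 1 - N) (N - 2)) (min (min i (N - 1)) (i - (N - 2))) := by
    ext a
    simp only [outer, inner, mem_inter, mem_Icc]
    omega
  have hcard := card_sdiff_add_card_inter outer inner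
  rw [hinter, Nat.card_Icc, Nat.card_Icc] at hcard
  rw [hfilter, hilbertFn]
  split_ifs <;> omega

lemma mul_le_sq_of_add_le_two_mul {a b c : ℕ} (h : a + c ≤ 2 * b) : a * c ≤ b ^ 2 := by
  have := four_mul_le_sq_add a c
  have : (a + c) ^ 2 ≤ (2 * b) ^ 2 := Nat.pow_le_pow_left h 2
  nlinarith

lemma hilbertFn_mul_le_sq {N : ℕ} (i : ℕ) :
    hilbertFn N i * hilbertFn N (i + 2) ≤ hilbertFn N (i + 1) ^ 2 := by
  have hconcave : hilbertFn N (i + 2) = 0 ∨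
      hilbertFn N i + hilbertFn N (i + 2) ≤ 2 * hilbertFn N (i + 1) := by
    simp only [hilbertFn]
    split_ifs <;> omega
  rcases hconcave with hzero | hle
  · simp [hzero]
  · exact mul_le_sq_of_add_le_two_mul hle

/-- For `N ≥ 5`, the monomial poset of
`A = K[x₁,x₂]/(x₁^N, x₂^N, x₁^{N-2}x₂^{N-2})` is log-concave:
`(dim_K A_i)² ≥ (dim_K A_{i-1})(dim_K A_{i+1})` for all `i`. -/
theorem stmt16 {K : Type*} [Field K] (N : ℕ) (hN : 5 ≤ N)
    (I : Ideal (MvPolynomial (Fin 2) K))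
    (hI : I = Ideal.span {X 0 ^ N, X 1 ^ N, X 0 ^ (N - 2) * X 1 ^ (N - 2)}) :
    ∀ i : ℕ, (MSet K I i).ncard * (MSet K I (i + 2)).ncard
      ≤ (MSet K I (i + 1)).ncard ^ 2 := by
  intro i
  have hmem (d : Fin 2 →₀ ℕ) : monomial d (1 : K) ∈ I ↔
      N ≤ d 0 ∨ N ≤ d 1 ∨ (N - 2 ≤ d 0 ∧ N - 2 ≤ d 1) := by
    rw [hI, monomial_mem_span_X_pow_iff]
  have hcount (j : ℕ) : (MSet K I j).ncard = hilbertFn N j := by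
    rw [ncard_mset_eq_card_filter_range I (fun a b => N ≤ a ∨ N ≤ b ∨ (N - 2 ≤ a ∧ N - 2 ≤ b)) hmem,
      card_filter_range_eq_hilbertFn (by omega)]
  simp only [hcount]
  exact hilbertFn_mul_le_sq i
end
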